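/- Let Δ be a finite simplicial complex and σ ∈ Δ nonempty. If σ is strictly contained in the intersection f_σ of all facets of Δ containing σ (i.e., σ ≠ f_σ), then Lk_σ(Δ) is a cone: there exists a vertex v ∈ f_σ ∖ σ such that every face ω ∈ Lk_σ(Δ) satisfies ω ∪ {v} ∈ Lk_σ(Δ). -/

import Mathlib

/-- A simplicial complex on `[n]`: a collection of subsets of `[n]` closed under inclusion. -/
def IsSimplicialComplex {n : ℕ} (Δ : Set (Finset (Fin n))) : Prop :=
  ∀ σ ∈ Δ, ∀ τ ⊆ σ, τ ∈ Δ

/-- The link of `σ` in `Δ`. -/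
def link {n : ℕ} (Δ : Set (Finset (Fin n))) (σ : Finset (Fin n)) : Set (Finset (Fin n)) :=
  {ω | ω ∈ Δ ∧ Disjoint σ ω ∧ σ ∪ ω ∈ Δ}

/-- `ρ` is a facet of `Δ`: a face maximal under inclusion. -/
def IsFacet {n : ℕ} (Δ : Set (Finset (Fin n))) (ρ : Finset (Fin n)) : Prop :=
  ρ ∈ Δ ∧ ∀ τ ∈ Δ, ρ ⊆ τ → τ = ρ

/-- `f_σ`: the intersection of all facets of `Δ` containing `σ`, as a set of vertices. -/
def facetInt {n : ℕ} (Δ : Set (Finset (Fin n))) (σ : Finset (Fin n)) : Set (Fin n) :=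
  {i | ∀ ρ, IsFacet Δ ρ → σ ⊆ ρ → i ∈ ρ}

theorem exists_isFacet_superset {n : ℕ} {Δ : Set (Finset (Fin n))} {τ : Finset (Fin n)}
    (hτ : τ ∈ Δ) : ∃ ρ, IsFacet Δ ρ ∧ τ ⊆ ρ := by
  obtain ⟨ρ, ⟨hρΔ, hτρ⟩, hmax⟩ := Set.Finite.exists_maximalFor Finset.card
    {ρ | ρ ∈ Δ ∧ τ ⊆ ρ} (Set.toFinite _) ⟨τ, hτ, subset_rfl⟩
  refine ⟨ρ, ⟨hρΔ, fun τ' hτ' hρτ' => ?_⟩, hτρ⟩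
  have hcard := hmax ⟨hτ', hτρ.trans hρτ'⟩ (Finset.card_le_card hρτ')
  exact (Finset.eq_of_subset_of_card_le hρτ' hcard).symm

theorem coe_subset_facetInt {n : ℕ} (Δ : Set (Finset (Fin n))) (σ : Finset (Fin n)) :
    (↑σ : Set (Fin n)) ⊆ facetInt Δ σ :=
  fun _ hi _ _ hσρ => hσρ hi

theorem exists_mem_facetInt_notMem {n : ℕ} {Δ : Set (Finset (Fin n))} {σ : Finset (Fin n)}
    (hstrict : (↑σ : Set (Fin n)) ≠ facetInt Δ σ) : ∃ v ∈ facetInt Δ σ, v ∉ σ := by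
  by_contra! h
  exact hstrict ((coe_subset_facetInt Δ σ).antisymm h)

/-- The face `σ ∪ ω` lies in a facet `ρ ⊇ σ`, and `ρ` contains every vertex of `f_σ`. -/
theorem insert_mem_link_of_mem_facetInt {n : ℕ} {Δ : Set (Finset (Fin n))}
    (hΔ : IsSimplicialComplex Δ) {σ ω : Finset (Fin n)} {v : Fin n}
    (hvf : v ∈ facetInt Δ σ) (hvσ : v ∉ σ) (hω : ω ∈ link Δ σ) :
    insert v ω ∈ link Δ σ := by
  obtain ⟨-, hdisj, hunΔ⟩ := hω
  obtain ⟨ρ, hρ, hunρ⟩ := exists_isFacet_superset hunΔ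
  have hσρ : σ ⊆ ρ := Finset.subset_union_left.trans hunρ
  have hvωρ : insert v ω ⊆ ρ :=
    Finset.insert_subset (hvf ρ hρ hσρ) (Finset.subset_union_right.trans hunρ)
  exact ⟨hΔ ρ hρ.1 _ hvωρ, Finset.disjoint_insert_right.mpr ⟨hvσ, hdisj⟩,
    hΔ ρ hρ.1 _ (Finset.union_subset hσρ hvωρ)⟩

theorem stmt3_general {n : ℕ} (Δ : Set (Finset (Fin n))) (hΔ : IsSimplicialComplex Δ)
    (σ : Finset (Fin n))
    (hstrict : (↑σ : Set (Fin n)) ≠ facetInt Δ σ) :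
    ∃ v : Fin n, v ∈ facetInt Δ σ ∧ v ∉ σ ∧
      ∀ ω ∈ link Δ σ, insert v ω ∈ link Δ σ := by
  obtain ⟨v, hvf, hvσ⟩ := exists_mem_facetInt_notMem hstrict
  exact ⟨v, hvf, hvσ, fun _ hω => insert_mem_link_of_mem_facetInt hΔ hvf hvσ hω⟩

theorem stmt3 {n : ℕ} (Δ : Set (Finset (Fin n))) (hΔ : IsSimplicialComplex Δ)
    (σ : Finset (Fin n)) (hσ : σ ∈ Δ) (hne : σ.Nonempty)
    (hstrict : (↑σ : Set (Fin n)) ≠ facetInt Δ σ) :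
    ∃ v : Fin n, v ∈ facetInt Δ σ ∧ v ∉ σ ∧
      ∀ ω ∈ link Δ σ, insert v ω ∈ link Δ σ :=
  stmt3_general Δ hΔ σ hstrict
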